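/- arXiv:1607.07050 — 2 statements merged into one kernel-verified Lean document; each statement's English description precedes it below -/
import Mathlib

section
/- Let f ∈ ℂ⟦t⟧ with nonzero constant coefficient and let (Pₙ)ₙ be the Appell sequence generated by f. Assume Pₙ(1 − x) = (−1)ⁿ·Pₙ(x) for all n ∈ ℕ and x ∈ ℂ, and assume there exists a positive integer N such that the power series F := f − Σ_{k=0}^{N} Eₖ(0)·tᵏ/k! is odd (all even-degree coefficients of F vanish), where Eₖ(0) is the value at 0 of the k-th Euler polynomial. Then f·(e^t + 1) = 2 in ℂ⟦t⟧ (i.e. f is the generating series 2/(e^t + 1)), and Pₙ is the n-th Euler polynomial Eₙ for every n. -/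
/-- The `n`-th Bernoulli polynomial, viewed in `ℂ[X]`. -/
noncomputable def Bc (n : ℕ) : Polynomial ℂ :=
  (Polynomial.bernoulli n).map (algebraMap ℚ ℂ)

/-- The `n`-th Euler polynomial in `ℂ[X]`:
`Eₙ(X) = (2/(n+1)) * (B_{n+1}(X) - 2^{n+1} * B_{n+1}(X/2))`. -/
noncomputable def Ec (n : ℕ) : Polynomial ℂ :=
  Polynomial.C (2 / ((n : ℂ) + 1)) *
    (Bc (n + 1) -
      Polynomial.C ((2 : ℂ) ^ (n + 1)) *
        (Bc (n + 1)).comp (Polynomial.C ((2 : ℂ)⁻¹) * Polynomial.X))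

open PowerSeries

lemma Bc_eval (n : ℕ) (x : ℚ) : (Bc n).eval ((algebraMap ℚ ℂ) x) =
    algebraMap ℚ ℂ ((Polynomial.bernoulli n).eval x) := by
  rw [Bc, Polynomial.eval_map, Polynomial.eval₂_hom]

lemma Bc_eval_zero (n : ℕ) : (Bc n).eval 0 = algebraMap ℚ ℂ (bernoulli n) := by
  have := Bc_eval n 0
  simpa [Polynomial.bernoulli_eval_zero] using this

lemma Ec_eval (n : ℕ) (y : ℂ) : (Ec n).eval y =
    2 / ((n : ℂ) + 1) * ((Bc (n+1)).eval y - 2 ^ (n+1) * (Bc (n+1)).eval (2⁻¹ * y)) := by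
  simp [Ec, Polynomial.eval_comp]

lemma Bser_gf (x : ℂ) :
    (PowerSeries.mk fun n => (Bc n).eval x / (n.factorial : ℂ)) * (PowerSeries.exp ℂ - 1) =
      PowerSeries.X * PowerSeries.rescale x (PowerSeries.exp ℂ) := by
  have h := Polynomial.bernoulli_generating_function (A := ℂ) x
  rw [← h]
  congr 1
  ext n
  simp only [coeff_mk]
  rw [map_smul, Polynomial.aeval_def, ← Polynomial.eval_map, ← Bc, Rat.smul_def]
  push_cast
  ring

lemma h2C : (2 : PowerSeries ℂ) = PowerSeries.C 2 :=
  (map_ofNat (PowerSeries.C) 2).symm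

lemma exp_sq : PowerSeries.exp ℂ * PowerSeries.exp ℂ = rescale 2 (PowerSeries.exp ℂ) := by
  have h := PowerSeries.exp_mul_exp_eq_exp_add (1 : ℂ) 1
  norm_num [rescale_one] at h
  exact h

lemma expm1_ne : PowerSeries.exp ℂ - 1 ≠ 0 := by
  intro h
  have := congrArg (PowerSeries.coeff 1) h
  simp [PowerSeries.coeff_exp] at this

lemma expp1_ne : PowerSeries.exp ℂ + 1 ≠ 0 := by
  intro h
  have := congrArg (PowerSeries.constantCoeff) h
  simp [PowerSeries.constantCoeff_exp] at this

lemma Eser_gf (x : ℂ) :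
    (PowerSeries.mk fun n => (Ec n).eval x / (n.factorial : ℂ)) * (PowerSeries.exp ℂ + 1) =
      2 * rescale x (PowerSeries.exp ℂ) := by
  set E := PowerSeries.mk fun n => (Ec n).eval x / (n.factorial : ℂ) with hE
  set B1 := PowerSeries.mk fun n => (Bc n).eval x / (n.factorial : ℂ) with hB1def
  set B2 := PowerSeries.mk fun n => (Bc n).eval (2⁻¹ * x) / (n.factorial : ℂ) with hB2def
  have hstar : PowerSeries.X * E = 2 * (B1 - rescale 2 B2) := by
    rw [h2C]
    ext n
    cases n with
    | zero =>
      rw [PowerSeries.coeff_zero_X_mul]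
      simp only [hB1def, hB2def, PowerSeries.coeff_C_mul, map_sub,
        PowerSeries.coeff_rescale, PowerSeries.coeff_mk]
      simp [Bc, Polynomial.bernoulli_zero]
    | succ n =>
      rw [PowerSeries.coeff_succ_X_mul]
      simp only [hE, hB1def, hB2def, PowerSeries.coeff_mk, PowerSeries.coeff_C_mul,
        map_sub, PowerSeries.coeff_rescale]
      rw [Ec_eval]
      have h1 : ((n : ℂ) + 1) ≠ 0 := Nat.cast_add_one_ne_zero n
      have h2 : ((n.factorial : ℂ)) ≠ 0 := Nat.cast_ne_zero.mpr (Nat.factorial_ne_zero n)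
      have h3 : (((n+1).factorial : ℂ)) ≠ 0 := Nat.cast_ne_zero.mpr (Nat.factorial_ne_zero _)
      rw [Nat.factorial_succ] at h3 ⊢
      push_cast at h3 ⊢
      field_simp
      try ring
  have hB1 := Bser_gf x
  have hB2 := Bser_gf (2⁻¹ * x)
  rw [← hB1def] at hB1
  rw [← hB2def] at hB2
  have hresc : rescale 2 B2 * (rescale 2 (PowerSeries.exp ℂ) - 1) =
      2 * PowerSeries.X * rescale x (PowerSeries.exp ℂ) := by
    have : rescale 2 (PowerSeries.exp ℂ) - 1 = rescale 2 (PowerSeries.exp ℂ - 1) := by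
      rw [map_sub, map_one]
    rw [this, ← map_mul, hB2, map_mul, PowerSeries.rescale_X, PowerSeries.rescale_rescale]
    have hx : 2⁻¹ * x * 2 = x := by ring
    rw [hx, ← h2C]
    try ring
  have hexps : (PowerSeries.exp ℂ - 1) * (PowerSeries.exp ℂ + 1) =
      rescale 2 (PowerSeries.exp ℂ) - 1 := by
    linear_combination exp_sq
  have key : PowerSeries.X * (PowerSeries.exp ℂ - 1) * (E * (PowerSeries.exp ℂ + 1)) =
      PowerSeries.X * (PowerSeries.exp ℂ - 1) * (2 * rescale x (PowerSeries.exp ℂ)) := by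
    linear_combination ((PowerSeries.exp ℂ - 1) * (PowerSeries.exp ℂ + 1)) * hstar +
      2 * (PowerSeries.exp ℂ + 1) * hB1 - 2 * hresc - 2 * (rescale 2 B2) * hexps
  exact mul_left_cancel₀ (mul_ne_zero PowerSeries.X_ne_zero expm1_ne) key

lemma Ec_zero_eval : (Ec 0).eval 0 = 1 := by
  have h := Ec_eval 0 0
  rw [h]
  norm_num [Bc_eval_zero, bernoulli_one, eq_ratCast]

lemma Ec_even_eval_zero {k : ℕ} (hk : Even k) (h0 : k ≠ 0) : (Ec k).eval 0 = 0 := by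
  have hb : bernoulli (k + 1) = 0 := by
    rw [bernoulli_eq_bernoulli'_of_ne_one (by omega)]
    exact bernoulli'_eq_zero_of_odd (Even.add_one hk) (by omega)
  rw [Ec_eval]
  simp [Bc_eval_zero, hb]


/-- **Euler polynomials by symmetry (Theorem 3.2).** If `(Pₙ)` is the Appell sequence
generated by `f`, with the symmetry `Pₙ(1 - x) = (-1)ⁿ Pₙ(x)`, and for some positive `N`
the series `F = f - Σ_{k=0}^{N} Eₖ(0) tᵏ/k!` is odd (all even coefficients vanish), then
`f = 2/(eᵗ + 1)` (i.e. `f * (eᵗ + 1) = 2`) and `Pₙ = Eₙ` for all `n`. -/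
theorem euler_by_symmetry (f : PowerSeries ℂ)
    (hf0 : PowerSeries.constantCoeff f ≠ 0) (P : ℕ → Polynomial ℂ)
    (hA : ∀ x : ℂ,
      PowerSeries.mk (fun n => (P n).eval x / (n.factorial : ℂ)) =
        f * PowerSeries.rescale x (PowerSeries.exp ℂ))
    (hsym : ∀ (n : ℕ) (x : ℂ), (P n).eval (1 - x) = (-1) ^ n * (P n).eval x)
    (N : ℕ) (hN : 1 ≤ N)
    (hFodd : ∀ m : ℕ,
      PowerSeries.coeff (2 * m)
        (f - PowerSeries.mk
          (fun k => if k ≤ N then (Ec k).eval 0 / (k.factorial : ℂ) else 0)) = 0) :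
    f * (PowerSeries.exp ℂ + 1) = 2 ∧ ∀ n : ℕ, P n = Ec n := by
  -- Step A: the reflection identity for f
  have h0 : PowerSeries.rescale (0:ℂ) (PowerSeries.exp ℂ) = 1 := by
    rw [PowerSeries.rescale_zero]
    simp [PowerSeries.constantCoeff_exp]
  have hfeq : f = PowerSeries.mk fun n => (P n).eval 0 / (n.factorial : ℂ) := by
    rw [hA 0, h0, mul_one]
  have h1 : PowerSeries.mk (fun n => (P n).eval 1 / (n.factorial : ℂ)) =
      f * PowerSeries.exp ℂ := by
    have := hA 1
    rwa [PowerSeries.rescale_one, RingHom.id_apply] at this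
  have hresc : rescale (-1 : ℂ) f = f * PowerSeries.exp ℂ := by
    calc rescale (-1 : ℂ) f
        = PowerSeries.mk fun n => (P n).eval 1 / (n.factorial : ℂ) := by
          rw [hfeq, PowerSeries.rescale_mk]
          ext k
          simp only [PowerSeries.coeff_mk]
          have := hsym k 0
          simp only [sub_zero] at this
          rw [this]
          ring
      _ = f * PowerSeries.exp ℂ := h1
  -- Step B: even coefficients of f
  have hcoeff0 : PowerSeries.coeff 0 f = 1 := by
    have h := hFodd 0
    rw [map_sub, sub_eq_zero] at h
    rw [show 2 * 0 = 0 from rfl] at h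
    rw [h, PowerSeries.coeff_mk]
    simp [Nat.zero_le, Ec_zero_eval]
  have hcoeffeven : ∀ m : ℕ, 0 < m → PowerSeries.coeff (2 * m) f = 0 := by
    intro m hm
    have h := hFodd m
    rw [map_sub, sub_eq_zero] at h
    rw [h, PowerSeries.coeff_mk]
    split_ifs with hle
    · rw [Ec_even_eval_zero (even_two_mul m) (by omega)]
      simp
    · rfl
  -- Step C: f * (exp + 1) = 2
  have hmain : f * (PowerSeries.exp ℂ + 1) = 2 := by
    have hsum : f * (PowerSeries.exp ℂ + 1) = f + rescale (-1 : ℂ) f := by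
      rw [hresc]; ring
    rw [hsum]
    ext n
    rw [map_add, PowerSeries.coeff_rescale, h2C, PowerSeries.coeff_C]
    rcases Nat.even_or_odd n with he | ho
    · obtain ⟨m, hm⟩ := he
      rcases Nat.eq_zero_or_pos m with rfl | hmpos
      · have : n = 0 := by omega
        subst this
        norm_num [hcoeff0]
      · have hn0 : n ≠ 0 := by omega
        have : PowerSeries.coeff n f = 0 := by
          have := hcoeffeven m hmpos
          rwa [show 2 * m = n by omega] at this
        simp [hn0, this]
    · have hn0 : n ≠ 0 := by rintro rfl; exact (Nat.not_odd_iff_even.mpr Even.zero) ho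
      rw [ho.neg_one_pow]
      simp [hn0]
  refine ⟨hmain, fun n => ?_⟩
  apply Polynomial.funext
  intro x
  have hgf : PowerSeries.mk (fun k => (P k).eval x / (k.factorial : ℂ)) *
      (PowerSeries.exp ℂ + 1) =
      PowerSeries.mk (fun k => (Ec k).eval x / (k.factorial : ℂ)) *
      (PowerSeries.exp ℂ + 1) := by
    rw [hA x, Eser_gf x]
    calc f * rescale x (PowerSeries.exp ℂ) * (PowerSeries.exp ℂ + 1)
        = f * (PowerSeries.exp ℂ + 1) * rescale x (PowerSeries.exp ℂ) := by ring
      _ = 2 * rescale x (PowerSeries.exp ℂ) := by rw [hmain]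
  have heq := mul_right_cancel₀ expp1_ne hgf
  have hco := congrArg (PowerSeries.coeff n) heq
  simp only [PowerSeries.coeff_mk] at hco
  have hfact : ((n.factorial : ℂ)) ≠ 0 := Nat.cast_ne_zero.mpr (Nat.factorial_ne_zero n)
  field_simp at hco
  exact hco
end

section
/- For every integer r ≥ 1 and every n ∈ ℕ, the Euler number of order r satisfies Eₙ⁽ʳ⁾ = (2^{r−1}/(r−1)!)·Σ_{j=0}^{r−1} (−1)^j·s(r, r−j)·E_{n+r−j−1}, where Eₘ = Eₘ(0) is the value at 0 of the m-th Euler polynomial and s(·,·) denotes signed Stirling numbers of the first kind. -/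
/-- The signed Stirling number of the first kind `s(n, k)`, defined as the coefficient of
`x^k` in the falling factorial `x (x-1) ⋯ (x - n + 1)`. -/
noncomputable def stir (n k : ℕ) : ℂ :=
  (∏ i ∈ Finset.range n, (Polynomial.X - Polynomial.C (i : ℂ))).coeff k

open PowerSeries Polynomial Finset

noncomputable def bC (n : ℕ) : ℂ := (Bc n).eval 0
noncomputable def eC (n : ℕ) : ℂ := (Ec n).eval 0
noncomputable def Fs : ℂ⟦X⟧ := PowerSeries.mk fun n => eC n / n.factorial
noncomputable def Gs : ℂ⟦X⟧ := PowerSeries.mk fun n => bC n / n.factorial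

lemma eC_eq (n : ℕ) : eC n = 2 / ((n:ℂ)+1) * ((1 - 2^(n+1)) * bC (n+1)) := by
  simp only [eC, Ec, bC, Polynomial.eval_mul, Polynomial.eval_sub, Polynomial.eval_C,
    Polynomial.eval_comp, Polynomial.eval_X, mul_zero, Polynomial.eval_add]
  ring

lemma hGs : Gs * (PowerSeries.exp ℂ - 1) = PowerSeries.X := by
  have h := Polynomial.bernoulli_generating_function (0 : ℂ)
  rw [PowerSeries.rescale_zero] at h
  simp only [RingHom.comp_apply, constantCoeff_exp, map_one, mul_one] at h
  rw [← h]
  congr 1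
  ext n
  simp only [Gs, PowerSeries.coeff_mk]
  rw [map_smul, Polynomial.aeval_def, Polynomial.eval₂_at_zero]
  rw [bC, Bc, Polynomial.eval_map, Polynomial.eval₂_at_zero]
  rw [Algebra.smul_def]
  rw [map_div₀, map_one, map_natCast]
  ring

lemma hGs2 : (rescale 2 Gs) * (PowerSeries.exp ℂ * PowerSeries.exp ℂ - 1)
    = PowerSeries.C 2 * PowerSeries.X := by
  have hr2 : PowerSeries.exp ℂ * PowerSeries.exp ℂ = rescale 2 (PowerSeries.exp ℂ) := by
    have := PowerSeries.exp_mul_exp_eq_exp_add (1 : ℂ) 1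
    norm_num at this
    simpa using this
  have h := congrArg (rescale (2:ℂ)) hGs
  rw [map_mul, map_sub, map_one, PowerSeries.rescale_X] at h
  rw [hr2, h]

lemma coeff_rescale2 (n : ℕ) : PowerSeries.coeff n (rescale 2 Gs) = 2^n * bC n / n.factorial := by
  rw [PowerSeries.coeff_rescale]
  simp [Gs, PowerSeries.coeff_mk]
  ring

lemma hXH : PowerSeries.X * Fs = PowerSeries.C 2 * Gs - PowerSeries.C 2 * rescale 2 Gs := by
  ext n
  cases n with
  | zero =>
      rw [PowerSeries.coeff_zero_X_mul, map_sub, PowerSeries.coeff_C_mul,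
        PowerSeries.coeff_C_mul, coeff_rescale2]
      simp [Gs, PowerSeries.coeff_mk]
  | succ n =>
      rw [PowerSeries.coeff_succ_X_mul, map_sub, PowerSeries.coeff_C_mul,
        PowerSeries.coeff_C_mul, coeff_rescale2]
      simp only [Fs, Gs, PowerSeries.coeff_mk]
      rw [eC_eq]
      have h1 : ((n:ℂ)+1) ≠ 0 := Nat.cast_add_one_ne_zero n
      have h2 : ((n.factorial : ℂ)) ≠ 0 := Nat.cast_ne_zero.mpr n.factorial_ne_zero
      rw [Nat.factorial_succ]
      push_cast
      field_simp

lemma C2eq : (PowerSeries.C 2) = (2 : ℂ⟦X⟧) := by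
  exact map_ofNat (PowerSeries.C) 2

lemma hA : (PowerSeries.exp ℂ + 1) * Fs = 2 := by
  have h1 := hGs
  have h2 := hGs2
  have h3 := hXH
  rw [C2eq] at h2 h3
  have key : PowerSeries.X * (PowerSeries.exp ℂ - 1) * ((PowerSeries.exp ℂ + 1) * Fs - 2) = 0 := by
    linear_combination (PowerSeries.exp ℂ - 1) * (PowerSeries.exp ℂ + 1) * h3
      + 2 * (PowerSeries.exp ℂ + 1) * h1 - 2 * h2
  have hX : (PowerSeries.X : ℂ⟦X⟧) ≠ 0 := PowerSeries.X_ne_zero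
  have he : (PowerSeries.exp ℂ - 1 : ℂ⟦X⟧) ≠ 0 := by
    intro h
    have := congrArg (PowerSeries.coeff 1) h
    simp [PowerSeries.coeff_exp] at this
  rcases mul_eq_zero.mp key with h | h
  · rcases mul_eq_zero.mp h with h' | h'
    · exact absurd h' hX
    · exact absurd h' he
  · exact sub_eq_zero.mp h

local notation "D" => PowerSeries.derivativeFun

lemma coeff_D (f : ℂ⟦X⟧) (n : ℕ) :
    PowerSeries.coeff n (D f) = PowerSeries.coeff (n + 1) f * (n + 1) :=
  PowerSeries.coeff_derivative f n

lemma D_C (r : ℂ) : D (PowerSeries.C r) = 0 := PowerSeries.derivative_C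

lemma pderiv_exp : D (PowerSeries.exp ℂ) = PowerSeries.exp ℂ := by
  ext n
  rw [coeff_D, PowerSeries.coeff_exp, PowerSeries.coeff_exp]
  rw [map_div₀, map_div₀, map_one, map_natCast, map_natCast, Nat.factorial_succ]
  have h2 : ((n.factorial : ℂ)) ≠ 0 := Nat.cast_ne_zero.mpr n.factorial_ne_zero
  have h1 : ((n:ℂ)+1) ≠ 0 := Nat.cast_add_one_ne_zero n
  push_cast
  field_simp

lemma pderiv_C_mul (a : ℂ) (f : ℂ⟦X⟧) : D (PowerSeries.C a * f) = PowerSeries.C a * D f := by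
  rw [PowerSeries.derivativeFun_mul, D_C, smul_eq_mul, smul_eq_mul,
    mul_zero, add_zero]

lemma pderiv_sum {s : Finset ℕ} (f : ℕ → ℂ⟦X⟧) :
    D (∑ m ∈ s, f m) = ∑ m ∈ s, D (f m) :=
  map_sum (PowerSeries.derivative ℂ).toLinearMap f s

lemma hB : Fs * Fs = 2 * (D Fs + Fs) := by
  have hd : (PowerSeries.exp ℂ + 1) * D Fs + Fs * PowerSeries.exp ℂ = 0 := by
    have h := congrArg D hA
    rw [PowerSeries.derivativeFun_mul, smul_eq_mul, smul_eq_mul,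
      PowerSeries.derivativeFun_add, pderiv_exp,
      PowerSeries.derivativeFun_one, add_zero, ← C2eq,
      D_C] at h
    linear_combination h
  have hu : (PowerSeries.exp ℂ + 1 : ℂ⟦X⟧) ≠ 0 := by
    intro h
    have := congrArg (PowerSeries.constantCoeff) h
    simp at this
  have key : (PowerSeries.exp ℂ + 1) * (Fs * Fs - 2 * (D Fs + Fs)) = 0 := by
    linear_combination Fs * hA - 2 * hd
  rcases mul_eq_zero.mp key with h | h
  · exact absurd h hu
  · exact sub_eq_zero.mp h

lemma iterD (m : ℕ) : D^[m] Fs = PowerSeries.mk (fun n => eC (n+m) / n.factorial) := by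
  induction m with
  | zero => simp [Fs]
  | succ m ih =>
      rw [Function.iterate_succ_apply', ih]
      ext n
      rw [coeff_D, PowerSeries.coeff_mk, PowerSeries.coeff_mk]
      have h2 : ((n.factorial : ℂ)) ≠ 0 := Nat.cast_ne_zero.mpr n.factorial_ne_zero
      have h1 : ((n:ℂ)+1) ≠ 0 := Nat.cast_add_one_ne_zero n
      have hnm : n + 1 + m = n + (m+1) := by omega
      rw [hnm, Nat.factorial_succ]
      push_cast
      field_simp

noncomputable def pk (k : ℕ) : Polynomial ℂ :=
  ∏ i ∈ Finset.range k, (Polynomial.X + Polynomial.C ((i:ℂ)+1))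

noncomputable def Tk (k : ℕ) : ℂ⟦X⟧ :=
  ∑ m ∈ Finset.range (k+1), PowerSeries.C ((pk k).coeff m) * D^[m] Fs

lemma pk_natDegree (k : ℕ) : (pk k).natDegree = k := by
  rw [pk, Polynomial.natDegree_prod]
  · simp only [Polynomial.natDegree_X_add_C, Finset.sum_const, smul_eq_mul, mul_one,
      Finset.card_range]
  · intro i _
    exact (Polynomial.monic_X_add_C _).ne_zero

lemma pk_coeff_top (k : ℕ) : (pk k).coeff (k+1) = 0 :=
  Polynomial.coeff_eq_zero_of_natDegree_lt (by rw [pk_natDegree]; omega)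

lemma Tstep (k : ℕ) : Tk (k+1) = D (Tk k) + PowerSeries.C ((k:ℂ)+1) * Tk k := by
  set c : ℂ := (k:ℂ)+1 with hc
  have hp : pk (k+1) = Polynomial.X * pk k + Polynomial.C c * pk k := by
    rw [pk, Finset.prod_range_succ, ← pk]
    ring
  unfold Tk
  rw [hp]
  simp only [Polynomial.coeff_add, map_add, add_mul]
  rw [Finset.sum_add_distrib]
  congr 1
  · rw [Finset.sum_range_succ']
    have h0 : (Polynomial.X * pk k).coeff 0 = 0 := by
      rw [Polynomial.mul_coeff_zero, Polynomial.coeff_X_zero, zero_mul]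
    rw [h0, map_zero, zero_mul, add_zero, pderiv_sum]
    apply Finset.sum_congr rfl
    intro m _
    rw [Polynomial.coeff_X_mul, pderiv_C_mul, Function.iterate_succ_apply']
  · rw [Finset.sum_range_succ]
    have : (Polynomial.C c * pk k).coeff (k+1) = 0 := by
      rw [Polynomial.coeff_C_mul, pk_coeff_top, mul_zero]
    rw [this, map_zero, zero_mul, add_zero, Finset.mul_sum]
    apply Finset.sum_congr rfl
    intro m _
    rw [Polynomial.coeff_C_mul, map_mul, mul_assoc]

lemma main_ind (k : ℕ) :
    PowerSeries.C (k.factorial : ℂ) * Fs^(k+1) = PowerSeries.C ((2:ℂ)^k) * Tk k := by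
  induction k with
  | zero => simp [Tk, pk]
  | succ k ih =>
      have hT := Tstep k
      have hdTk := congrArg D ih
      rw [pderiv_C_mul, pderiv_C_mul] at hdTk
      have hpow : D (Fs^(k+1)) = PowerSeries.C ((k:ℂ)+1) * (Fs^k * D Fs) := by
        have h := Derivation.leibniz_pow (PowerSeries.derivative ℂ) Fs (n := k+1)
        simp only [Nat.add_sub_cancel] at h
        have : (PowerSeries.derivative ℂ) Fs = D Fs := rfl
        rw [this] at h
        have h2 : (PowerSeries.derivative ℂ) (Fs^(k+1)) = D (Fs^(k+1)) := rfl
        rw [h2] at h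
        rw [h]
        simp only [smul_eq_mul, nsmul_eq_mul]
        push_cast [map_add, map_natCast, map_one]
        ring
      rw [hpow] at hdTk
      have hf : PowerSeries.C (((k+1).factorial : ℕ) : ℂ)
          = PowerSeries.C ((k:ℂ)+1) * PowerSeries.C ((k.factorial : ℕ) : ℂ) := by
        rw [← map_mul]
        congr 1
        rw [Nat.factorial_succ]
        push_cast
        ring
      have h2 : PowerSeries.C ((2:ℂ)^(k+1)) = 2 * PowerSeries.C ((2:ℂ)^k) := by
        rw [← C2eq, ← map_mul]
        congr 1
        ring
      rw [hf, h2, hT]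
      linear_combination 2 * hdTk
        + (PowerSeries.C ((k:ℂ)+1) * PowerSeries.C ((k.factorial : ℕ) : ℂ) * Fs^k) * hB
        + 2 * PowerSeries.C ((k:ℂ)+1) * ih

lemma comp_neg_coeff (q : Polynomial ℂ) (n : ℕ) :
    (q.comp (-Polynomial.X)).coeff n = (-1)^n * q.coeff n := by
  induction q using Polynomial.induction_on' with
  | add p q hp hq => simp [Polynomial.add_comp, hp, hq, mul_add]
  | monomial m a =>
      rw [← Polynomial.C_mul_X_pow_eq_monomial, Polynomial.mul_comp, Polynomial.C_comp,
        Polynomial.pow_comp, Polynomial.X_comp, neg_pow]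
      have hX : ((-1 : Polynomial ℂ))^m = Polynomial.C ((-1:ℂ)^m) := by
        rw [map_pow, map_neg, map_one]
      rw [hX, Polynomial.coeff_C_mul, Polynomial.coeff_C_mul, Polynomial.coeff_C_mul]
      by_cases h : n = m <;> (simp [h, Polynomial.coeff_X_pow]; try ring)

lemma stir_pk (k m : ℕ) (hm : m ≤ k) :
    (pk k).coeff m = (-1:ℂ)^(k-m) * stir (k+1) (m+1) := by
  have hXp : Polynomial.X * pk k
      = ∏ i ∈ Finset.range (k+1), (Polynomial.X + Polynomial.C (i:ℂ)) := by
    rw [Finset.prod_range_succ']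
    simp only [Nat.cast_zero, map_zero, add_zero, Nat.cast_add, Nat.cast_one]
    rw [pk]
    ring
  have hcomp : (∏ i ∈ Finset.range (k+1),
        (Polynomial.X - Polynomial.C (i:ℂ))).comp (-Polynomial.X)
      = (-1)^(k+1) * (Polynomial.X * pk k) := by
    rw [Polynomial.prod_comp]
    simp only [Polynomial.sub_comp, Polynomial.X_comp, Polynomial.C_comp]
    rw [hXp]
    have hcongr : ∀ i ∈ Finset.range (k+1),
        -Polynomial.X - Polynomial.C ((i:ℕ):ℂ)
          = (-1) * (Polynomial.X + Polynomial.C ((i:ℕ):ℂ)) := by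
      intro i _
      ring
    rw [Finset.prod_congr rfl hcongr, Finset.prod_mul_distrib, Finset.prod_const,
      Finset.card_range]
  have h1 := comp_neg_coeff (∏ i ∈ Finset.range (k+1),
      (Polynomial.X - Polynomial.C (i:ℂ))) (m+1)
  rw [hcomp] at h1
  rw [show ((-1 : Polynomial ℂ))^(k+1) = Polynomial.C ((-1:ℂ)^(k+1)) by simp] at h1
  rw [Polynomial.coeff_C_mul, Polynomial.coeff_X_mul] at h1
  have hs : stir (k+1) (m+1)
      = (∏ i ∈ Finset.range (k+1), (Polynomial.X - Polynomial.C (i:ℂ))).coeff (m+1) := rfl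
  rw [← hs] at h1
  have hmul := congrArg (fun z => (-1:ℂ)^(k+1) * z) h1
  simp only [← mul_assoc, ← pow_add] at hmul
  have e1 : (-1:ℂ)^(k+1+(k+1)) = 1 := Even.neg_one_pow ⟨k+1, by ring⟩
  have e2 : (-1:ℂ)^(k+1+(m+1)) = (-1:ℂ)^(k-m) := by
    have h3 : k+1+(m+1) = (k-m) + 2*(m+1) := by omega
    rw [h3, pow_add, pow_mul, neg_one_sq, one_pow, mul_one]
  rw [e1, e2, one_mul] at hmul
  exact hmul


/-- **Lemma 3.5.** The Euler numbers of order `r ≥ 1`, defined by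
`(eᵗ + 1)ʳ Σₙ Eₙ⁽ʳ⁾ tⁿ/n! = 2ʳ`, satisfy
`Eₙ⁽ʳ⁾ = (2^{r-1}/(r-1)!) Σ_{j=0}^{r-1} (-1)ʲ s(r, r-j) E_{n+r-j-1}`, where `Eₘ = Eₘ(0)`. -/
theorem euler_number_order_r (r : ℕ) (hr : 1 ≤ r) (E : ℕ → ℂ)
    (hE : (PowerSeries.exp ℂ + 1) ^ r *
        PowerSeries.mk (fun n => E n / (n.factorial : ℂ)) =
      PowerSeries.C ((2 : ℂ) ^ r)) :
    ∀ n : ℕ, E n =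
      (2 : ℂ) ^ (r - 1) / ((r - 1).factorial : ℂ) *
        ∑ j ∈ Finset.range r,
          (-1 : ℂ) ^ j * stir r (r - j) * (Ec (n + r - j - 1)).eval 0 := by
  intro n
  obtain ⟨k, rfl⟩ : ∃ k, r = k + 1 := ⟨r - 1, by omega⟩
  have hu : (PowerSeries.exp ℂ + 1 : ℂ⟦X⟧) ≠ 0 := by
    intro h
    have := congrArg (PowerSeries.constantCoeff) h
    simp at this
  have hEF : PowerSeries.mk (fun n => E n / (n.factorial : ℂ)) = Fs ^ (k+1) := by
    have h2 : (PowerSeries.exp ℂ + 1)^(k+1) * Fs^(k+1) = PowerSeries.C ((2:ℂ)^(k+1)) := by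
      rw [← mul_pow, hA, ← C2eq, ← map_pow]
    exact mul_left_cancel₀ (pow_ne_zero _ hu) (hE.trans h2.symm)
  have hco := congrArg (PowerSeries.coeff n) (main_ind k)
  rw [PowerSeries.coeff_C_mul, PowerSeries.coeff_C_mul, ← hEF, PowerSeries.coeff_mk] at hco
  have hT : PowerSeries.coeff n (Tk k)
      = (∑ m ∈ Finset.range (k+1), (pk k).coeff m * eC (n+m)) / n.factorial := by
    rw [Tk, map_sum, Finset.sum_div]
    apply Finset.sum_congr rfl
    intro m _
    rw [PowerSeries.coeff_C_mul, iterD, PowerSeries.coeff_mk]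
    ring
  rw [hT] at hco
  have hnfac : ((n.factorial : ℂ)) ≠ 0 := Nat.cast_ne_zero.mpr n.factorial_ne_zero
  have hkfac : ((k.factorial : ℂ)) ≠ 0 := Nat.cast_ne_zero.mpr k.factorial_ne_zero
  have hEn : E n = (2:ℂ)^k / (k.factorial : ℂ)
      * ∑ m ∈ Finset.range (k+1), (pk k).coeff m * eC (n+m) := by
    field_simp at hco ⊢
    linear_combination hco
  rw [hEn]
  simp only [Nat.add_sub_cancel]
  congr 1
  rw [← Finset.sum_range_reflect]
  apply Finset.sum_congr rfl
  intro j hj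
  rw [Finset.mem_range] at hj
  have h1 : k + 1 - 1 - j = k - j := by omega
  have h2 : k + 1 - j = (k - j) + 1 := by omega
  have h3 : n + (k + 1) - j - 1 = n + (k - j) := by omega
  have h4 : k - (k - j) = j := by omega
  rw [h1, h2, h3, stir_pk k (k - j) (by omega), h4]
  have h5 : eC (n + (k - j)) = (Ec (n + (k - j))).eval 0 := rfl
  rw [h5]
end
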